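/- arXiv:2407.04867 — 5 statements merged into one kernel-verified Lean document; each statement's English description precedes it below -/
import Mathlib

section
/- Fix real parameters LBk, LBl, UBk, PMkl, PMlk with PMlk ≠ UBk − LBl. Suppose (ck, cl, δkl, δlk) ∈ ℝ⁴ satisfies with equality: ck − cl = PMlk − (PMkl + PMlk)·δkl + (UBk − PMlk − LBl)·δlk; ck = LBk + (LBl + PMlk − LBk)·δlk; cl = LBl + (LBk + PMkl − LBl)·δkl; and δkl + δlk = 1. Then δlk = 0 (and hence δkl = 1). -/
theorem ru_strong_lemma_ii (LBk LBl UBk PMkl PMlk ck cl δkl δlk : ℝ)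
    (hPM : PMlk ≠ UBk - LBl)
    (h1 : ck - cl = PMlk - (PMkl + PMlk)*δkl + (UBk - PMlk - LBl)*δlk)
    (h2 : ck = LBk + (LBl + PMlk - LBk)*δlk)
    (h3 : cl = LBl + (LBk + PMkl - LBl)*δkl)
    (h4 : δkl + δlk = 1) :
    δlk = 0 ∧ δkl = 1 := by
  have key : (PMlk - (UBk - LBl)) * δlk = 0 := by
    linear_combination -h2 + h3 + h1 + (LBk - LBl - PMlk) * h4
  have hne : PMlk - (UBk - LBl) ≠ 0 := sub_ne_zero.mpr hPM
  have hδ : δlk = 0 := by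
    rcases mul_eq_zero.mp key with h | h
    · exact absurd h hne
    · exact h
  exact ⟨hδ, by linarith⟩
end

section
/- Fix real parameters LBl, LBk, UBk, UBl, PMkl, PMlk with PMkl ≠ UBl − LBk. Suppose (ck, cl, δkl, δlk) ∈ ℝ⁴ satisfies with equality: ck − cl = PMlk − (PMkl + PMlk)·δkl + (UBk − PMlk − LBl)·δlk; ck = UBk + (UBl − PMkl − UBk)·δkl; cl = LBl + (LBk + PMkl − LBl)·δkl; and δkl + δlk = 1. Then δkl = 0 (and hence δlk = 1). -/
theorem ru_strong_lemma_iii (LBl LBk UBk UBl PMkl PMlk ck cl δkl δlk : ℝ)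
    (hPM : PMkl ≠ UBl - LBk)
    (h1 : ck - cl = PMlk - (PMkl + PMlk)*δkl + (UBk - PMlk - LBl)*δlk)
    (h2 : ck = UBk + (UBl - PMkl - UBk)*δkl)
    (h3 : cl = LBl + (LBk + PMkl - LBl)*δkl)
    (h4 : δkl + δlk = 1) :
    δkl = 0 ∧ δlk = 1 := by
  have h5 : δlk = 1 - δkl := by linarith
  subst h5
  have key : (UBl - LBk - PMkl) * δkl = 0 := by nlinarith [h1, h2, h3]
  have hne : UBl - LBk - PMkl ≠ 0 := by
    intro h; apply hPM; linarith
  have : δkl = 0 := by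
    rcases mul_eq_zero.mp key with h | h
    · exact absurd h hne
    · exact h
  exact ⟨this, by linarith⟩
end

section
/- Fix real parameters LBl, UBk, UBl, PMkl, PMlk with PMlk ≠ UBk − LBl. Suppose (ck, cl, δkl, δlk) ∈ ℝ⁴ satisfies with equality: ck − cl = PMlk − (PMkl + PMlk)·δkl + (UBk − PMlk − LBl)·δlk; ck = UBk + (UBl − PMkl − UBk)·δkl; cl = UBl + (UBk − PMlk − UBl)·δlk; and δkl + δlk = 1. Then δlk = 0 (and hence δkl = 1). -/
theorem ru_strong_lemma_iv (LBl UBk UBl PMkl PMlk ck cl δkl δlk : ℝ)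
    (hPM : PMlk ≠ UBk - LBl)
    (h1 : ck - cl = PMlk - (PMkl + PMlk)*δkl + (UBk - PMlk - LBl)*δlk)
    (h2 : ck = UBk + (UBl - PMkl - UBk)*δkl)
    (h3 : cl = UBl + (UBk - PMlk - UBl)*δlk)
    (h4 : δkl + δlk = 1) :
    δlk = 0 ∧ δkl = 1 := by
  have key : (UBk - LBl - PMlk) * δlk = 0 := by
    linear_combination -h1 + h2 - h3 - (UBk - UBl - PMlk) * h4
  have hne : UBk - LBl - PMlk ≠ 0 := by
    intro h; apply hPM; linarith
  have hδ : δlk = 0 := by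
    rcases mul_eq_zero.mp key with h | h
    · exact absurd h hne
    · exact h
  exact ⟨hδ, by linarith⟩
end

section
/- Fix real parameters LBix, UBjx, PMijx, LBiy, UBjy, PMijy with LBiy + PMijy − UBjy ≠ 0. Define β = (LBix + PMijx − UBjx)/(LBiy + PMijy − UBjy) and γ = LBix + PMijx − UBjx. For variables (cix, cjx, ciy, cjy, δij, δji, Δij) ∈ ℝ⁷, suppose the following seven equations hold, where g = δij + δji − Δij: cjx = LBix + PMijx − (LBix + PMijx − LBjx)·g; cix = UBjx − PMijx − (UBjx − PMijx − UBix)·g; cjx − cix = PMijx + (LBjx − PMijx − UBix)·g; and with h = 1 − δij + Δij: cjy = LBiy + PMijy − (LBiy + PMijy − LBjy)·h; ciy = UBjy − PMijy − (UBjy − PMijy − UBiy)·h; cjy − ciy = PMijy + (LBjy − PMijy − UBiy)·h; and δji = 1. Then the linear combination (eq1) − (eq2) − (eq3) + β·(eq4) − β·(eq5) − β·(eq6) − γ·(eq7) of these equations (each written as left-side minus right-side equal to zero) reduces identically to 0 = 0; i.e., the seven affine constraints are linearly dependent. -/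
theorem sbm_lemma_dependence_i
    (LBix UBjx PMijx LBiy UBjy PMijy LBjx UBix LBjy UBiy : ℝ)
    (hy : LBiy + PMijy - UBjy ≠ 0) :
    ∀ cix cjx ciy cjy δij δji Δij : ℝ,
      let β := (LBix + PMijx - UBjx) / (LBiy + PMijy - UBjy)
      let γ := LBix + PMijx - UBjx
      let g := δij + δji - Δij
      let h := 1 - δij + Δij
      ((cjx - (LBix + PMijx - (LBix + PMijx - LBjx)*g))
        - (cix - (UBjx - PMijx - (UBjx - PMijx - UBix)*g))
        - ((cjx - cix) - (PMijx + (LBjx - PMijx - UBix)*g))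
        + β * (cjy - (LBiy + PMijy - (LBiy + PMijy - LBjy)*h))
        - β * (ciy - (UBjy - PMijy - (UBjy - PMijy - UBiy)*h))
        - β * ((cjy - ciy) - (PMijy + (LBjy - PMijy - UBiy)*h))
        - γ * (δji - 1)) = 0 := by
  intro cix cjx ciy cjy δij δji Δij β γ g h
  simp only [β, γ, g, h]
  field_simp
  ring
end

section
/- Fix real parameters LBi, LBj, UBi, UBj, PMij, PMji with LBj < UBj, and define BMij = UBi + PMij − LBj, BMji = UBj + PMji − LBi. Suppose (ci, cj, δij, δji) ∈ ℝ⁴ satisfies the four tight equations ci = LBi·(1 − δji) + (LBj + PMji)·δji, ci = UBi·(1 − δij) + (UBj − PMij)·δij, ci + PMij = cj + BMij·(1 − δij), and cj + PMji = ci + BMji·(1 − δji). Then δij + δji = 1. -/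
theorem su_case_IIib_logic_tight (LBi LBj UBi UBj PMij PMji ci cj δij δji : ℝ)
    (hj : LBj < UBj)
    (h1 : ci = LBi*(1 - δji) + (LBj + PMji)*δji)
    (h2 : ci = UBi*(1 - δij) + (UBj - PMij)*δij)
    (h3 : ci + PMij = cj + (UBi + PMij - LBj)*(1 - δij))
    (h4 : cj + PMji = ci + (UBj + PMji - LBi)*(1 - δji)) :
    δij + δji = 1 := by
  have key : (UBj - LBj) * (δij + δji - 1) = 0 := by linarith [h1, h2, h3, h4]
  have hne : UBj - LBj ≠ 0 := by linarith
  have := mul_eq_zero.mp key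
  rcases this with h | h
  · exact absurd h hne
  · linarith
end
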